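/- Let P(λ) = Σ_{i=0}^{m} λⁱAᵢ be an n×n matrix polynomial and λ ∈ ℂ. The backward error η₂(λ, P) := min{‖(‖ΔA₀‖₂,…,‖ΔA_m‖₂)‖₂ : det(P(λ) + Σ λⁱΔAᵢ) = 0} satisfies η₂(λ, P) = σ_min(P(λ)) / ‖(1, λ, …, λᵐ)‖₂, where σ_min denotes the smallest singular value. -/

import Mathlib

open Matrix BigOperators

noncomputable def evnorm {n : Type*} [Fintype n] (v : n → ℂ) : ℝ :=
  Real.sqrt (∑ i, ‖v i‖ ^ 2)

noncomputable def frob {m n : Type*} [Fintype m] [Fintype n] (M : Matrix m n ℂ) : ℝ :=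
  Real.sqrt (∑ i, ∑ j, ‖M i j‖ ^ 2)

noncomputable def sigmaMax {m n : Type*} [Fintype m] [Fintype n] (T : Matrix m n ℂ) : ℝ :=
  sSup {x | ∃ v, evnorm v = 1 ∧ x = evnorm (T.mulVec v)}

noncomputable def sigmaMin {m n : Type*} [Fintype m] [Fintype n] (T : Matrix m n ℂ) : ℝ :=
  sInf {x | ∃ v, evnorm v = 1 ∧ x = evnorm (T.mulVec v)}

def hcat3 {i a b c : Type*} (A : Matrix i a ℂ) (B : Matrix i b ℂ) (C : Matrix i c ℂ) :
    Matrix i (a ⊕ b ⊕ c) ℂ :=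
  Matrix.of fun x j => match j with
    | Sum.inl j => A x j
    | Sum.inr (Sum.inl j) => B x j
    | Sum.inr (Sum.inr j) => C x j

def vcat3 {a b c j : Type*} (A : Matrix a j ℂ) (B : Matrix b j ℂ) (C : Matrix c j ℂ) :
    Matrix (a ⊕ b ⊕ c) j ℂ :=
  Matrix.of fun i y => match i with
    | Sum.inl i => A i y
    | Sum.inr (Sum.inl i) => B i y
    | Sum.inr (Sum.inr i) => C i y

noncomputable def Lnorm (m : ℕ) (μ : ℂ) : ℝ :=
  Real.sqrt (∑ i ∈ Finset.range (m + 1), ‖μ‖ ^ (2 * i))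

/-!
If `P + ∑ j, c j • ΔA j` is singular, a unit null vector `v` gives
`σ_min(P) ≤ ‖P v‖ = ‖∑ j, c j • ΔA j v‖ ≤ ∑ j, |c j| ‖ΔA j‖₂ ≤ ‖c‖₂ ‖(‖ΔA j‖₂)_j‖₂` by
Cauchy–Schwarz. Conversely, if the unit vector `x` attains `σ_min(P)`, the rank-one matrices
`ΔA j = -(conj (c j) / ‖c‖₂²) (P x) x*` make `x` a null vector and attain equality. The theorem
is the case `c = (1, λ, …, λ^m)`.
-/

section EuclideanNorm

variable {κ : Type*} [Fintype κ]

lemma evnorm_eq_norm_toLp (v : κ → ℂ) : evnorm v = ‖WithLp.toLp 2 v‖ := by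
  rw [EuclideanSpace.norm_eq]; rfl

lemma evnorm_nonneg (v : κ → ℂ) : 0 ≤ evnorm v := Real.sqrt_nonneg _

lemma evnorm_sq (v : κ → ℂ) : evnorm v ^ 2 = ∑ i, ‖v i‖ ^ 2 :=
  Real.sq_sqrt (Finset.sum_nonneg fun _ _ => sq_nonneg _)

lemma evnorm_pos {v : κ → ℂ} (hv : v ≠ 0) : 0 < evnorm v := by
  rw [evnorm_eq_norm_toLp, norm_pos_iff]
  exact (WithLp.toLp_eq_zero 2).not.mpr hv

lemma evnorm_smul (a : ℂ) (v : κ → ℂ) : evnorm (a • v) = ‖a‖ * evnorm v := by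
  rw [evnorm_eq_norm_toLp, evnorm_eq_norm_toLp, WithLp.toLp_smul, norm_smul]

lemma evnorm_neg (v : κ → ℂ) : evnorm (-v) = evnorm v := by
  rw [evnorm_eq_norm_toLp, evnorm_eq_norm_toLp, WithLp.toLp_neg, norm_neg]

lemma evnorm_sum_le {J : Type*} (s : Finset J) (v : J → κ → ℂ) :
    evnorm (∑ j ∈ s, v j) ≤ ∑ j ∈ s, evnorm (v j) := by
  simpa only [evnorm_eq_norm_toLp, WithLp.toLp_sum] using
    norm_sum_le s fun j => WithLp.toLp 2 (v j)

lemma star_dotProduct_eq_inner (x v : κ → ℂ) :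
    star x ⬝ᵥ v = inner ℂ (WithLp.toLp 2 x) (WithLp.toLp 2 v) := by
  simp [dotProduct, PiLp.inner_apply, mul_comm]

lemma norm_star_dotProduct_le (x v : κ → ℂ) : ‖star x ⬝ᵥ v‖ ≤ evnorm x * evnorm v := by
  rw [star_dotProduct_eq_inner, evnorm_eq_norm_toLp, evnorm_eq_norm_toLp]
  exact norm_inner_le_norm _ _

lemma star_dotProduct_self_of_evnorm_eq_one {x : κ → ℂ} (hx : evnorm x = 1) :
    star x ⬝ᵥ x = 1 := by
  rw [star_dotProduct_eq_inner, inner_self_eq_norm_sq_to_K, ← evnorm_eq_norm_toLp, hx]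
  norm_num

lemma exists_evnorm_eq_one_mulVec_eq_zero [DecidableEq κ] {T : Matrix κ κ ℂ} (h : T.det = 0) :
    ∃ v, evnorm v = 1 ∧ T *ᵥ v = 0 := by
  obtain ⟨w, hw0, hw⟩ := exists_mulVec_eq_zero_iff.mpr h
  refine ⟨((evnorm w)⁻¹ : ℂ) • w, ?_, by rw [mulVec_smul, hw, smul_zero]⟩
  rw [evnorm_smul, norm_inv, Complex.norm_real, Real.norm_of_nonneg (evnorm_nonneg w)]
  exact inv_mul_cancel₀ (evnorm_pos hw0).ne'

end EuclideanNorm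

section SingularValues

variable {ι κ : Type*} [Fintype ι] [Fintype κ]

def unitImageNorms (T : Matrix ι κ ℂ) : Set ℝ :=
  {x | ∃ v, evnorm v = 1 ∧ x = evnorm (T *ᵥ v)}

lemma isCompact_unitImageNorms (T : Matrix ι κ ℂ) : IsCompact (unitImageNorms T) := by
  have himage : unitImageNorms T =
      (fun w : EuclideanSpace ℂ κ => evnorm (T *ᵥ w.ofLp)) '' Metric.sphere 0 1 := by
    ext x
    simp only [unitImageNorms, Set.mem_ofPred_eq, Set.mem_image, mem_sphere_zero_iff_norm,
      evnorm_eq_norm_toLp]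
    constructor
    · rintro ⟨v, hv, rfl⟩
      exact ⟨WithLp.toLp 2 v, hv, rfl⟩
    · rintro ⟨w, hw, rfl⟩
      exact ⟨w.ofLp, hw, rfl⟩
  rw [himage]
  refine (isCompact_sphere 0 1).image ?_
  simp only [evnorm_eq_norm_toLp]
  exact continuous_norm.comp ((PiLp.continuous_toLp 2 _).comp
    (continuous_const.matrix_mulVec (PiLp.continuous_ofLp 2 _)))

lemma evnorm_mulVec_le_sigmaMax (T : Matrix ι κ ℂ) {v : κ → ℂ} (hv : evnorm v = 1) :
    evnorm (T *ᵥ v) ≤ sigmaMax T :=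
  le_csSup (isCompact_unitImageNorms T).bddAbove ⟨v, hv, rfl⟩

lemma sigmaMin_le_evnorm_mulVec (T : Matrix ι κ ℂ) {v : κ → ℂ} (hv : evnorm v = 1) :
    sigmaMin T ≤ evnorm (T *ᵥ v) :=
  csInf_le (isCompact_unitImageNorms T).bddBelow ⟨v, hv, rfl⟩

lemma exists_evnorm_mulVec_eq_sigmaMin [Nonempty κ] (T : Matrix ι κ ℂ) :
    ∃ v, evnorm v = 1 ∧ evnorm (T *ᵥ v) = sigmaMin T := by
  classical
  have hne : (unitImageNorms T).Nonempty := by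
    refine ⟨_, Pi.single (Classical.arbitrary κ) 1, ?_, rfl⟩
    rw [evnorm_eq_norm_toLp, PiLp.toLp_single, PiLp.norm_single, norm_one]
  obtain ⟨v, hv, h⟩ := (isCompact_unitImageNorms T).sInf_mem hne
  exact ⟨v, hv, h.symm⟩

lemma sigmaMax_vecMulVec_star (u : ι → ℂ) {x : κ → ℂ} (hx : evnorm x = 1) :
    sigmaMax (vecMulVec u (star x)) = evnorm u := by
  have hmulVec : ∀ v, vecMulVec u (star x) *ᵥ v = (star x ⬝ᵥ v) • u := fun v => by
    rw [vecMulVec_mulVec, op_smul_eq_smul]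
  apply le_antisymm
  · refine csSup_le ⟨_, x, hx, rfl⟩ ?_
    rintro _ ⟨v, hv, rfl⟩
    rw [hmulVec, evnorm_smul]
    have := norm_star_dotProduct_le x v
    rw [hx, hv, one_mul] at this
    exact mul_le_of_le_one_left (evnorm_nonneg u) this
  · have := evnorm_mulVec_le_sigmaMax (vecMulVec u (star x)) hx
    rwa [hmulVec, star_dotProduct_self_of_evnorm_eq_one hx, one_smul] at this

end SingularValues

section BackwardError

variable {ι J : Type*} [Fintype ι] [Fintype J]

noncomputable def backwardError [DecidableEq ι] (P : Matrix ι ι ℂ) (c : J → ℂ) : ℝ :=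
  sInf {x | ∃ ΔA : J → Matrix ι ι ℂ, (P + ∑ j, c j • ΔA j).det = 0 ∧
    x = √(∑ j, sigmaMax (ΔA j) ^ 2)}

lemma sigmaMin_le_of_det_eq_zero [DecidableEq ι] (P : Matrix ι ι ℂ) (c : J → ℂ)
    (ΔA : J → Matrix ι ι ℂ)    (hdet : (P + ∑ j, c j • ΔA j).det = 0) :
    sigmaMin P ≤ evnorm c * √(∑ j, sigmaMax (ΔA j) ^ 2) := by
  obtain ⟨v, hv, hker⟩ := exists_evnorm_eq_one_mulVec_eq_zero hdet
  have hPv : P *ᵥ v = -∑ j, c j • (ΔA j *ᵥ v) := by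
    rw [add_mulVec, sum_mulVec] at hker
    simpa only [smul_mulVec] using eq_neg_of_add_eq_zero_left hker
  calc sigmaMin P ≤ evnorm (P *ᵥ v) := sigmaMin_le_evnorm_mulVec P hv
    _ ≤ ∑ j, ‖c j‖ * evnorm (ΔA j *ᵥ v) := by
      rw [hPv, evnorm_neg]
      refine (evnorm_sum_le _ _).trans_eq ?_
      simp only [evnorm_smul]
    _ ≤ ∑ j, ‖c j‖ * sigmaMax (ΔA j) := by
      gcongr with j
      exact evnorm_mulVec_le_sigmaMax _ hv
    _ ≤ evnorm c * √(∑ j, sigmaMax (ΔA j) ^ 2) := Real.sum_mul_le_sqrt_mul_sqrt _ _ _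

lemma sum_mul_star_eq_evnorm_sq (c : J → ℂ) :
    ∑ j, c j * star (c j) = ((evnorm c ^ 2 : ℝ) : ℂ) := by
  simp only [evnorm_sq, Complex.ofReal_sum, Complex.ofReal_pow]
  exact Finset.sum_congr rfl fun j _ => RCLike.mul_conj (c j)

/-- The coefficients `-conj (c j) / ‖c‖²` make `∑ j, c j • ΔA j = -(P x) x*`, so a unit vector `x`
becomes a null vector of the perturbed matrix. -/
noncomputable def optimalPerturbation (P : Matrix ι ι ℂ) (c : J → ℂ) (x : ι → ℂ) (j : J) :
    Matrix ι ι ℂ :=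
  vecMulVec ((-star (c j) / ((evnorm c ^ 2 : ℝ) : ℂ)) • (P *ᵥ x)) (star x)

variable (P : Matrix ι ι ℂ) {c : J → ℂ} {x : ι → ℂ}

lemma mulVec_add_sum_smul_optimalPerturbation (hc : c ≠ 0) (hx : evnorm x = 1) :
    (P + ∑ j, c j • optimalPerturbation P c x j) *ᵥ x = 0 := by
  have hL : ((evnorm c ^ 2 : ℝ) : ℂ) ≠ 0 := by
    exact_mod_cast (pow_pos (evnorm_pos hc) 2).ne'
  have hcoeff : ∑ j, c j * (-star (c j) / ((evnorm c ^ 2 : ℝ) : ℂ)) = -1 := by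
    simp only [mul_div_assoc', mul_neg, neg_div, Finset.sum_neg_distrib, ← Finset.sum_div,
      sum_mul_star_eq_evnorm_sq, div_self hL]
  simp only [optimalPerturbation, add_mulVec, sum_mulVec, smul_mulVec, vecMulVec_mulVec,
    op_smul_eq_smul, star_dotProduct_self_of_evnorm_eq_one hx, smul_smul, one_mul,
    ← Finset.sum_smul, hcoeff, neg_one_smul, add_neg_cancel]

lemma sqrt_sum_sigmaMax_optimalPerturbation_sq (hc : c ≠ 0) (hx : evnorm x = 1) :
    √(∑ j, sigmaMax (optimalPerturbation P c x j) ^ 2) = evnorm (P *ᵥ x) / evnorm c := by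
  have hL := evnorm_pos hc
  have hσ : ∀ j,
      sigmaMax (optimalPerturbation P c x j) = ‖c j‖ / evnorm c ^ 2 * evnorm (P *ᵥ x) := by
    intro j
    rw [optimalPerturbation, sigmaMax_vecMulVec_star _ hx, evnorm_smul, norm_div, norm_neg,
      norm_star, Complex.norm_real, Real.norm_of_nonneg (by positivity)]
  have hsum : ∑ j, sigmaMax (optimalPerturbation P c x j) ^ 2 =
      (evnorm (P *ᵥ x) / evnorm c) ^ 2 := by
    simp only [hσ, mul_pow, div_pow, ← Finset.sum_mul, ← Finset.sum_div, ← evnorm_sq]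
    field_simp
  rw [hsum, Real.sqrt_sq (div_nonneg (evnorm_nonneg _) hL.le)]

lemma det_add_sum_smul_optimalPerturbation [DecidableEq ι] (hc : c ≠ 0) (hx : evnorm x = 1) :
    (P + ∑ j, c j • optimalPerturbation P c x j).det = 0 := by
  refine exists_mulVec_eq_zero_iff.mp ⟨x, ?_, mulVec_add_sum_smul_optimalPerturbation P hc hx⟩
  rintro rfl
  simp [evnorm] at hx

theorem backwardError_eq [DecidableEq ι] (hc : c ≠ 0) :
    backwardError P c = sigmaMin P / evnorm c := by
  rcases isEmpty_or_nonempty ι with hι | hι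
  · simp [backwardError, sigmaMin, evnorm]
  obtain ⟨x, hx, hPx⟩ := exists_evnorm_mulVec_eq_sigmaMin P
  refine IsLeast.csInf_eq ⟨⟨optimalPerturbation P c x, ?_, ?_⟩, ?_⟩
  · exact det_add_sum_smul_optimalPerturbation P hc hx
  · rw [sqrt_sum_sigmaMax_optimalPerturbation_sq P hc hx, hPx]
  · rintro _ ⟨ΔA, hdet, rfl⟩
    rw [div_le_iff₀' (evnorm_pos hc)]
    exact sigmaMin_le_of_det_eq_zero P c ΔA hdet

end BackwardError

lemma Lnorm_eq_evnorm_pow (m : ℕ) (μ : ℂ) :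
    Lnorm m μ = evnorm fun i : Fin (m + 1) => μ ^ (i : ℕ) := by
  rw [Lnorm, evnorm, ← Fin.sum_univ_eq_sum_range]
  simp only [norm_pow, ← pow_mul, mul_comm]

theorem stmt12_general {n m : ℕ} (μ : ℂ)
    (P : Matrix (Fin n) (Fin n) ℂ) :
    sInf {x | ∃ ΔA : Fin (m + 1) → Matrix (Fin n) (Fin n) ℂ,
        (P + ∑ i : Fin (m + 1), μ ^ (i : ℕ) • ΔA i).det = 0 ∧
        x = Real.sqrt (∑ i, sigmaMax (ΔA i) ^ 2)} = sigmaMin P / Lnorm m μ := by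
  have hpow : (fun i : Fin (m + 1) => μ ^ (i : ℕ)) ≠ 0 := fun h => by
    simpa using congr_fun h 0
  rw [Lnorm_eq_evnorm_pow]
  exact backwardError_eq P hpow

theorem stmt12 {n m : ℕ} (μ : ℂ)
    (Amat : Fin (m + 1) → Matrix (Fin n) (Fin n) ℂ)
    (P : Matrix (Fin n) (Fin n) ℂ) (hP : P = ∑ i : Fin (m + 1), μ ^ (i : ℕ) • Amat i) :
    sInf {x | ∃ ΔA : Fin (m + 1) → Matrix (Fin n) (Fin n) ℂ,
        (P + ∑ i : Fin (m + 1), μ ^ (i : ℕ) • ΔA i).det = 0 ∧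
        x = Real.sqrt (∑ i, sigmaMax (ΔA i) ^ 2)} = sigmaMin P / Lnorm m μ :=
  stmt12_general μ P
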